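/- arXiv:1504.00423 — 3 statements merged into one kernel-verified Lean document; each statement's English description precedes it below -/
import Mathlib

section
/- Assume W ∈ C³(ℝ²;ℝ) satisfies W ≥ 0 with W(p) = 0 iff p ∈ {p₋, p₊} (W1), and there exist R₀, c₀ > 0 such that ∇W(p)·p ≥ c₀|p|² for all |p| ≥ R₀ (W3). Then there exists a constant K > 0, depending only on W, such that every heteroclinic connection V : ℝ → ℝ² (i.e., every solution of V'' = ∇W(V) with V(x) → p± as x → ±∞) satisfies ‖V‖_{L^∞(ℝ)} ≤ K. -/
open Set Filter MeasureTheory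
open scoped Topology

noncomputable section

/-- Euclidean norm on `ℝ × ℝ`. -/
def enorm2 (v : ℝ × ℝ) : ℝ := Real.sqrt (v.1 ^ 2 + v.2 ^ 2)

/-- Euclidean dot product on `ℝ × ℝ`. -/
def dot2 (v w : ℝ × ℝ) : ℝ := v.1 * w.1 + v.2 * w.2

/-- Gradient of `W : ℝ² → ℝ` (via the Fréchet derivative). -/
def gradW (W : ℝ × ℝ → ℝ) (p : ℝ × ℝ) : ℝ × ℝ :=
  (fderiv ℝ W p (1, 0), fderiv ℝ W p (0, 1))

/-!
At a point where `|V|` is maximal and exceeds `R₀`, the function `f = |V|²` has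
`f' = 2 V·V' = 0` and `f'' = 2 |V'|² + 2 ∇W(V)·V ≥ 2 c₀ |V|² > 0` by (W3), so it cannot have a
local maximum there. Since `|V(x)| → |p±|` as `x → ±∞`, a value of `|V|` above
`max R₀ |p₊| |p₋|` would force a global maximum of `|V|` at such a point.
-/

theorem Continuous.exists_forall_ge_of_tendsto_atBot_atTop
    {α β : Type*} [LinearOrder α] [TopologicalSpace α] [OrderClosedTopology α]
    [LinearOrder β] [TopologicalSpace β] [OrderClosedTopology β] [CompactIccSpace β]
    [NoMaxOrder β] [NoMinOrder β] {f : β → α} (hf : Continuous f) {a b : α} {x₀ : β}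
    (ha : Tendsto f atBot (𝓝 a)) (hb : Tendsto f atTop (𝓝 b)) (hax : a < f x₀)
    (hbx : b < f x₀) : ∃ z, ∀ y, f y ≤ f z := by
  refine hf.exists_forall_ge' x₀ ?_
  rw [cocompact_eq_atBot_atTop, eventually_sup]
  exact ⟨(ha.eventually_lt_const hax).mono fun _ => le_of_lt,
    (hb.eventually_lt_const hbx).mono fun _ => le_of_lt⟩

theorem not_isLocalMax_of_deriv_deriv_pos {f : ℝ → ℝ} {x₀ : ℝ}
    (hf : 0 < deriv (deriv f) x₀) (hc : ContinuousAt f x₀) : ¬ IsLocalMax f x₀ := by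
  intro hmax
  have hmin := isLocalMin_of_deriv_deriv_pos hf hmax.deriv_eq_zero hc
  have hconst : f =ᶠ[𝓝 x₀] fun _ => f x₀ :=
    (hmin.and hmax).mono fun _ h => le_antisymm h.2 h.1
  refine hf.ne' ?_
  rw [hconst.deriv.deriv_eq]
  simp

theorem dot2_comm (v w : ℝ × ℝ) : dot2 v w = dot2 w v := by
  simp only [dot2]; ring

theorem dot2_self_nonneg (v : ℝ × ℝ) : 0 ≤ dot2 v v :=
  add_nonneg (mul_self_nonneg _) (mul_self_nonneg _)

theorem enorm2_eq_sqrt_dot2_self (v : ℝ × ℝ) : enorm2 v = √(dot2 v v) := by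
  simp only [enorm2, dot2, sq]

theorem enorm2_le_enorm2_iff {v w : ℝ × ℝ} : enorm2 v ≤ enorm2 w ↔ dot2 v v ≤ dot2 w w := by
  simp only [enorm2_eq_sqrt_dot2_self, Real.sqrt_le_sqrt_iff (dot2_self_nonneg w)]

theorem continuous_enorm2 : Continuous enorm2 := by
  unfold enorm2; fun_prop

theorem HasDerivAt.dot2 {u v : ℝ → ℝ × ℝ} {u' v' : ℝ × ℝ} {x : ℝ}
    (hu : HasDerivAt u u' x) (hv : HasDerivAt v v' x) :
    HasDerivAt (fun t => dot2 (u t) (v t)) (dot2 u' (v x) + dot2 (u x) v') x := by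
  have hu₁ : HasDerivAt (fun t => (u t).1) u'.1 x := hu.fst
  have hu₂ : HasDerivAt (fun t => (u t).2) u'.2 x := hu.snd
  have hv₁ : HasDerivAt (fun t => (v t).1) v'.1 x := hv.fst
  have hv₂ : HasDerivAt (fun t => (v t).2) v'.2 x := hv.snd
  exact ((hu₁.mul hv₁).add (hu₂.mul hv₂)).congr_deriv (by simp only [_root_.dot2]; ring)

theorem not_isLocalMax_dot2_self {V V' : ℝ → ℝ × ℝ} {z : ℝ} {a : ℝ × ℝ}
    (hV : ∀ x, HasDerivAt V (V' x) x) (hV' : HasDerivAt V' a z) (ha : 0 < dot2 a (V z)) :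
    ¬ IsLocalMax (fun t => dot2 (V t) (V t)) z := by
  have hderiv : deriv (fun t => dot2 (V t) (V t)) = fun t => 2 * dot2 (V t) (V' t) := by
    funext t
    rw [((hV t).dot2 (hV t)).deriv, dot2_comm (V' t)]
    ring
  refine not_isLocalMax_of_deriv_deriv_pos ?_ ((hV z).dot2 (hV z)).continuousAt
  rw [hderiv, (((hV z).dot2 hV').const_mul 2).deriv, dot2_comm (V z) a]
  have := dot2_self_nonneg (V' z)
  positivity

theorem heteroclinic_apriori_bound_general (W : ℝ × ℝ → ℝ) (pp pm : ℝ × ℝ)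
    (R0 c0 : ℝ) (hR0 : 0 < R0) (hc0 : 0 < c0)
    (hW3 : ∀ p : ℝ × ℝ, R0 ≤ enorm2 p → c0 * enorm2 p ^ 2 ≤ dot2 (gradW W p) p) :
    ∃ K > (0:ℝ), ∀ V V' : ℝ → ℝ × ℝ,
      (∀ x, HasDerivAt V (V' x) x) →
      (∀ x, HasDerivAt V' (gradW W (V x)) x) →
      Tendsto V atTop (𝓝 pp) → Tendsto V atBot (𝓝 pm) →
      ∀ x : ℝ, enorm2 (V x) ≤ K := by
  refine ⟨max R0 (max (enorm2 pp) (enorm2 pm)), lt_max_of_lt_left hR0, ?_⟩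
  intro V V' hV hV' hTop hBot x
  by_contra! hx
  have hVc : Continuous V := continuous_iff_continuousAt.2 fun t => (hV t).continuousAt
  obtain ⟨hpp, hpm⟩ := max_lt_iff.1 ((le_max_right _ _).trans_lt hx)
  obtain ⟨z, hz⟩ := (continuous_enorm2.comp hVc).exists_forall_ge_of_tendsto_atBot_atTop
    ((continuous_enorm2.tendsto pm).comp hBot) ((continuous_enorm2.tendsto pp).comp hTop) hpm hpp
  have hRz : R0 < enorm2 (V z) := (le_max_left _ _).trans_lt (hx.trans_le (hz x))
  have hmax : IsLocalMax (fun t => dot2 (V t) (V t)) z :=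
    Eventually.of_forall fun t => enorm2_le_enorm2_iff.1 (hz t)
  refine not_isLocalMax_dot2_self hV (hV' z) ?_ hmax
  calc 0 < c0 * enorm2 (V z) ^ 2 := by have := hR0.trans hRz; positivity
    _ ≤ dot2 (gradW W (V z)) (V z) := hW3 _ hRz.le

/-- A priori `L^∞` bound for heteroclinics: if `W ∈ C³(ℝ²)` satisfies
(W1) `W ≥ 0` with zeros exactly `{p₋, p₊}` and (W3) `∇W(p)·p ≥ c₀|p|²` for `|p| ≥ R₀`,
then there is `K > 0`, depending only on `W`, such that every solution `V` of
`V'' = ∇W(V)` with `V(±∞) = p±` satisfies `‖V‖_{L^∞(ℝ)} ≤ K`. -/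
theorem heteroclinic_apriori_bound (W : ℝ × ℝ → ℝ) (pp pm : ℝ × ℝ) (hne : pp ≠ pm)
    (hW : ContDiff ℝ 3 W) (hWnn : ∀ p, 0 ≤ W p)
    (hzeros : ∀ p, W p = 0 ↔ p = pp ∨ p = pm)
    (R0 c0 : ℝ) (hR0 : 0 < R0) (hc0 : 0 < c0)
    (hW3 : ∀ p : ℝ × ℝ, R0 ≤ enorm2 p → c0 * enorm2 p ^ 2 ≤ dot2 (gradW W p) p) :
    ∃ K > (0:ℝ), ∀ V V' : ℝ → ℝ × ℝ,
      (∀ x, HasDerivAt V (V' x) x) →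
      (∀ x, HasDerivAt V' (gradW W (V x)) x) →
      Tendsto V atTop (𝓝 pp) → Tendsto V atBot (𝓝 pm) →
      ∀ x : ℝ, enorm2 (V x) ≤ K :=
  heteroclinic_apriori_bound_general W pp pm R0 c0 hR0 hc0 hW3
end
end

section
/- Suppose that in Euclidean coordinates adapted to the eigenvectors of the Hessian at the well p₊, W(p) = λ₁²(p₁ − p₊⁽¹⁾)² + λ₂²(p₂ − p₊⁽²⁾)² exactly for |p − p₊| < r with r > 0 and λ₁, λ₂ > 0. If U : ℝ → ℝ² is a heteroclinic traveling wave, i.e., a solution of −ν J U' = U'' − ∇W(U) with U(x) → p₊ as x → +∞ (so that U remains in the ball B_r(p₊) on some interval [x₀, ∞)), then ν² ≤ 2(λ₁ + λ₂)². Consequently, if both wells are exactly quadratic the wave speed satisfies ν² ≤ 2(λ₁ + λ₂)² with the eigenvalues taken at either well. -/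
open Set Filter MeasureTheory
open scoped Topology

noncomputable section

/-- The symplectic matrix `J` with rows `(0,1)` and `(-1,0)`, acting on `ℝ²`. -/
def Jmat (v : ℝ × ℝ) : ℝ × ℝ := (v.2, -v.1)

/-!
Suppose `ν² > 2(λ₁ + λ₂)²`. Once `U` stays in the ball where `W` is quadratic, `u = U - p₊` and
`p = U'` solve a linear system with two conserved quadratic forms: the energy
`|p|² - 2λ₁²u₁² - 2λ₂²u₂²` and a second integral, built from the energy of `(p, p')`, which is
positive definite exactly above the speed limit. A virial argument (the derivative of `u ⬝ p`
tends to the energy while `u ⬝ p → 0`) shows that `u → 0` forces `p → 0`; hence the definite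
integral vanishes, and `U` sits at the equilibrium `(p₊, 0)` at a finite time. Uniqueness for the
ODE near this `C¹` equilibrium gives `U ≡ p₊`, contradicting `U(-∞) = p₋ ≠ p₊`.
-/

lemma tendsto_zero_of_tendsto_sq {α : Type*} {l : Filter α} {f : α → ℝ}
    (h : Tendsto (fun x => f x ^ 2) l (𝓝 0)) : Tendsto f l (𝓝 0) := by
  rw [tendsto_zero_iff_abs_tendsto_zero]
  simpa [Function.comp_def, Real.sqrt_sq_eq_abs] using h.sqrt

lemma tendsto_dot_and_cross_nhds_zero {α : Type*} {l : Filter α} {u₁ u₂ p₁ p₂ : α → ℝ} {e : ℝ}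
    (hu₁ : Tendsto u₁ l (𝓝 0)) (hu₂ : Tendsto u₂ l (𝓝 0))
    (hp : Tendsto (fun x => p₁ x ^ 2 + p₂ x ^ 2) l (𝓝 e)) :
    Tendsto (fun x => u₁ x * p₁ x + u₂ x * p₂ x) l (𝓝 0) ∧
      Tendsto (fun x => u₂ x * p₁ x - u₁ x * p₂ x) l (𝓝 0) := by
  have hup : Tendsto (fun x => (u₁ x ^ 2 + u₂ x ^ 2) * (p₁ x ^ 2 + p₂ x ^ 2)) l (𝓝 0) := by
    simpa using ((hu₁.pow 2).add (hu₂.pow 2)).mul hp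
  -- Lagrange's identity: `(u ⬝ p)² + (u × p)² = |u|² |p|²`
  exact ⟨tendsto_zero_of_tendsto_sq <| squeeze_zero (fun _ => sq_nonneg _)
      (fun x => by nlinarith [sq_nonneg (u₂ x * p₁ x - u₁ x * p₂ x)]) hup,
    tendsto_zero_of_tendsto_sq <| squeeze_zero (fun _ => sq_nonneg _)
      (fun x => by nlinarith [sq_nonneg (u₁ x * p₁ x + u₂ x * p₂ x)]) hup⟩

lemma eq_zero_of_tendsto_of_tendsto_deriv {f f' : ℝ → ℝ} {c L : ℝ}
    (hf : ∀ᶠ x in atTop, HasDerivAt f (f' x) x) (hc : Tendsto f atTop (𝓝 c))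
    (hL : Tendsto f' atTop (𝓝 L)) : L = 0 := by
  have hslope : Tendsto (fun x => f (x + 1) - f x) atTop (𝓝 L) := by
    refine tendsto_nhds.2 fun V hV hLV => ?_
    obtain ⟨x₀, hx₀⟩ := eventually_atTop.1 ((hL.eventually_mem (hV.mem_nhds hLV)).and hf)
    filter_upwards [eventually_ge_atTop x₀] with x hx
    obtain ⟨ξ, hξ, hslope⟩ := exists_hasDerivAt_eq_slope f f' (lt_add_one x)
      (HasDerivAt.continuousOn fun y hy => (hx₀ y (hx.trans hy.1)).2)
      (fun y hy => (hx₀ y (hx.trans hy.1.le)).2)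
    simpa [hslope] using (hx₀ ξ (hx.trans hξ.1.le)).1
  refine tendsto_nhds_unique hslope ?_
  simpa using (hc.comp (tendsto_atTop_add_const_right atTop 1 tendsto_id)).sub hc

lemma IsOpen.exists_is_const_of_hasDerivAt_zero {s : Set ℝ} (hs : IsOpen s)
    (hs' : IsPreconnected s) {g : ℝ → ℝ} (hg : ∀ x ∈ s, HasDerivAt g 0 x) :
    ∃ c, ∀ x ∈ s, g x = c :=
  hs.exists_is_const_of_deriv_eq_zero hs'
    (fun x hx => (hg x hx).differentiableAt.differentiableWithinAt) (fun x hx => (hg x hx).deriv)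

theorem ODE_solution_eq_equilibrium {E : Type*} [NormedAddCommGroup E]
    [NormedSpace ℝ E] {v : E → E} {x₀ : E} (hv : ContDiffAt ℝ 1 v x₀) (hx₀ : v x₀ = 0)
    {f : ℝ → E} (hf : ∀ t, HasDerivAt f (v (f t)) t) {t₀ : ℝ} (ht₀ : f t₀ = x₀) (t : ℝ) :
    f t = x₀ := by
  obtain ⟨K, s, hs, hlip⟩ := hv.exists_lipschitzOnWith
  have hcont : Continuous f := continuous_iff_continuousAt.2 fun t => (hf t).continuousAt
  have hopen : IsOpen {t | f t = x₀} := by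
    refine isOpen_iff_mem_nhds.2 fun t ht => ?_
    have hfs : ∀ᶠ t' in 𝓝 t, f t' ∈ s :=
      hcont.continuousAt.preimage_mem_nhds (by rwa [show f t = x₀ from ht])
    exact ODE_solution_unique_of_eventually (v := fun _ => v) (s := fun _ => s)
      (.of_forall fun _ => hlip) (hfs.mono fun t' ht' => ⟨hf t', ht'⟩)
      (.of_forall fun _ => ⟨by simpa [hx₀] using hasDerivAt_const _ x₀, mem_of_mem_nhds hs⟩) ht
  have hclopen : IsClopen {t | f t = x₀} := ⟨isClosed_eq hcont continuous_const, hopen⟩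
  exact (hclopen.eq_univ ⟨t₀, ht₀⟩ ▸ mem_univ t : t ∈ {t | f t = x₀})

lemma binaryForm_nonneg {α γ δ : ℝ} (hα : 0 < α) (hdisc : γ ^ 2 ≤ α * δ) (x y : ℝ) :
    0 ≤ α * x ^ 2 + 2 * γ * x * y + δ * y ^ 2 := by
  refine (mul_nonneg_iff_of_pos_left hα).1 ?_
  nlinarith [sq_nonneg (α * x + γ * y), mul_nonneg (sub_nonneg.2 hdisc) (sq_nonneg y)]

lemma eq_zero_of_binaryForm_eq_zero {α γ δ x y : ℝ} (hα : 0 < α) (hdisc : γ ^ 2 < α * δ)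
    (h : α * x ^ 2 + 2 * γ * x * y + δ * y ^ 2 = 0) : x = 0 ∧ y = 0 := by
  have hy : (α * δ - γ ^ 2) * y ^ 2 = 0 :=
    le_antisymm (by nlinarith [sq_nonneg (α * x + γ * y)])
      (mul_nonneg (sub_nonneg.2 hdisc.le) (sq_nonneg y))
  obtain rfl : y = 0 := by simpa [(sub_pos.2 hdisc).ne'] using hy
  exact ⟨by simpa [hα.ne'] using h, rfl⟩

lemma gradW_congr {W V : ℝ × ℝ → ℝ} {p : ℝ × ℝ} (h : W =ᶠ[𝓝 p] V) : gradW W p = gradW V p := by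
  simp only [gradW, h.fderiv_eq]

lemma gradW_quadratic (l₁ l₂ : ℝ) (c p : ℝ × ℝ) :
    gradW (fun q => l₁ ^ 2 * (q.1 - c.1) ^ 2 + l₂ ^ 2 * (q.2 - c.2) ^ 2) p =
      (2 * l₁ ^ 2 * (p.1 - c.1), 2 * l₂ ^ 2 * (p.2 - c.2)) := by
  have h₁ : HasFDerivAt (fun q : ℝ × ℝ => q.1 - c.1) (ContinuousLinearMap.fst ℝ ℝ ℝ) p :=
    hasFDerivAt_fst.sub_const c.1
  have h₂ : HasFDerivAt (fun q : ℝ × ℝ => q.2 - c.2) (ContinuousLinearMap.snd ℝ ℝ ℝ) p :=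
    hasFDerivAt_snd.sub_const c.2
  have h : HasFDerivAt (fun q : ℝ × ℝ => l₁ ^ 2 * (q.1 - c.1) ^ 2 + l₂ ^ 2 * (q.2 - c.2) ^ 2) _ p :=
    ((h₁.pow 2).const_mul (l₁ ^ 2)).add ((h₂.pow 2).const_mul (l₂ ^ 2))
  rw [gradW, h.fderiv]
  simp only [Nat.add_one_sub_one, pow_one, nsmul_eq_mul, Nat.cast_ofNat,
    add_apply, smul_apply, ContinuousLinearMap.coe_fst',
    ContinuousLinearMap.coe_snd', smul_eq_mul, mul_one, mul_zero, add_zero, zero_add, Prod.mk.injEq]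
  constructor <;> ring

/-- The componentwise form of `-νJU' = U'' - ∇W(U)` for `U = p₊ + u`, `U' = p`, near a well where
`∇W(p₊ + u) = (a u₁, b u₂)`. -/
def IsLinearWave (a b ν : ℝ) (s : Set ℝ) (u₁ u₂ p₁ p₂ : ℝ → ℝ) : Prop :=
  ∀ x ∈ s, HasDerivAt u₁ (p₁ x) x ∧ HasDerivAt u₂ (p₂ x) x ∧
    HasDerivAt p₁ (a * u₁ x - ν * p₂ x) x ∧ HasDerivAt p₂ (b * u₂ x + ν * p₁ x) x

/-- Twice `½|U'|² - W(U)`, conserved because `JU' ⟂ U'`. -/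
def waveEnergy (a b u₁ u₂ p₁ p₂ : ℝ) : ℝ := p₁ ^ 2 + p₂ ^ 2 - a * u₁ ^ 2 - b * u₂ ^ 2

/-- Twice the energy of the derivative `(p, ∇W - νJp)`, itself a solution, minus a multiple of the
energy chosen so that the result is positive definite above the speed limit. -/
def waveIntegral (a b ν u₁ u₂ p₁ p₂ : ℝ) : ℝ :=
  2 * waveEnergy a b p₁ p₂ (a * u₁ - ν * p₂) (b * u₂ + ν * p₁)
    - (ν ^ 2 - a - b) * waveEnergy a b u₁ u₂ p₁ p₂

lemma eq_zero_of_waveIntegral_eq_zero {l₁ l₂ ν u₁ u₂ p₁ p₂ : ℝ} (hl₁ : 0 < l₁) (hl₂ : 0 < l₂)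
    (hν : 2 * (l₁ + l₂) ^ 2 < ν ^ 2)
    (h : waveIntegral (2 * l₁ ^ 2) (2 * l₂ ^ 2) ν u₁ u₂ p₁ p₂ = 0) :
    u₁ = 0 ∧ u₂ = 0 ∧ p₁ = 0 ∧ p₂ = 0 := by
  have hl : 0 < l₁ * l₂ := mul_pos hl₁ hl₂
  have hc₁ : 0 < ν ^ 2 + 2 * l₁ ^ 2 - 2 * l₂ ^ 2 := by nlinarith
  have hc₂ : 0 < ν ^ 2 - 2 * l₁ ^ 2 + 2 * l₂ ^ 2 := by nlinarith
  -- both discriminants equal `β² - 16 λ₁² λ₂²`, positive exactly when no eigenvalue `μ` is real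
  have hD : 0 < (ν ^ 2 - 2 * (l₁ + l₂) ^ 2) * (ν ^ 2 - 2 * (l₁ - l₂) ^ 2) :=
    mul_pos (by linarith) (by nlinarith)
  have hdisc₁ : 4 * (2 * l₁ ^ 2) * ν ^ 2 < (ν ^ 2 + 2 * l₁ ^ 2 - 2 * l₂ ^ 2) ^ 2 := by
    linarith [show (ν ^ 2 + 2 * l₁ ^ 2 - 2 * l₂ ^ 2) ^ 2 - 4 * (2 * l₁ ^ 2) * ν ^ 2 =
      (ν ^ 2 - 2 * (l₁ + l₂) ^ 2) * (ν ^ 2 - 2 * (l₁ - l₂) ^ 2) by ring]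
  have hdisc₂ : 4 * (2 * l₂ ^ 2) * ν ^ 2 < (ν ^ 2 - 2 * l₁ ^ 2 + 2 * l₂ ^ 2) ^ 2 := by
    linarith [show (ν ^ 2 - 2 * l₁ ^ 2 + 2 * l₂ ^ 2) ^ 2 - 4 * (2 * l₂ ^ 2) * ν ^ 2 =
      (ν ^ 2 - 2 * (l₁ + l₂) ^ 2) * (ν ^ 2 - 2 * (l₁ - l₂) ^ 2) by ring]
  have ha : 0 < 2 * l₁ ^ 2 := by positivity
  have hb : 0 < 2 * l₂ ^ 2 := by positivity
  generalize 2 * l₁ ^ 2 = a at h hc₁ hc₂ hdisc₁ hdisc₂ ha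
  generalize 2 * l₂ ^ 2 = b at h hc₁ hc₂ hdisc₁ hdisc₂ hb
  have hα₁ : 0 < a * (ν ^ 2 + a - b) := mul_pos ha hc₁
  have hα₂ : 0 < b * (ν ^ 2 - a + b) := mul_pos hb hc₂
  have hdisc₁' : (-2 * a * ν) ^ 2 < a * (ν ^ 2 + a - b) * (ν ^ 2 + a - b) := by
    nlinarith [mul_lt_mul_of_pos_left hdisc₁ ha]
  have hdisc₂' : (2 * b * ν) ^ 2 < b * (ν ^ 2 - a + b) * (ν ^ 2 - a + b) := by
    nlinarith [mul_lt_mul_of_pos_left hdisc₂ hb]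
  have hB₁ := binaryForm_nonneg hα₁ hdisc₁'.le u₁ p₂
  have hB₂ := binaryForm_nonneg hα₂ hdisc₂'.le u₂ p₁
  have hsplit : waveIntegral a b ν u₁ u₂ p₁ p₂ =
      (a * (ν ^ 2 + a - b) * u₁ ^ 2 + 2 * (-2 * a * ν) * u₁ * p₂ + (ν ^ 2 + a - b) * p₂ ^ 2) +
      (b * (ν ^ 2 - a + b) * u₂ ^ 2 + 2 * (2 * b * ν) * u₂ * p₁ + (ν ^ 2 - a + b) * p₁ ^ 2) := by
    simp only [waveIntegral, waveEnergy]; ring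
  rw [hsplit, add_eq_zero_iff_of_nonneg hB₁ hB₂] at h
  obtain ⟨hu₁, hp₂⟩ := eq_zero_of_binaryForm_eq_zero hα₁ hdisc₁' h.1
  obtain ⟨hu₂, hp₁⟩ := eq_zero_of_binaryForm_eq_zero hα₂ hdisc₂' h.2
  exact ⟨hu₁, hu₂, hp₁, hp₂⟩

namespace IsLinearWave

variable {a b ν : ℝ} {s : Set ℝ} {u₁ u₂ p₁ p₂ : ℝ → ℝ}

lemma hasDerivAt_waveEnergy (h : IsLinearWave a b ν s u₁ u₂ p₁ p₂) {x : ℝ} (hx : x ∈ s) :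
    HasDerivAt (fun y => waveEnergy a b (u₁ y) (u₂ y) (p₁ y) (p₂ y)) 0 x := by
  obtain ⟨hu₁, hu₂, hp₁, hp₂⟩ := h x hx
  exact ((((hp₁.pow 2).add (hp₂.pow 2)).sub ((hu₁.pow 2).const_mul a)).sub
    ((hu₂.pow 2).const_mul b)).congr_deriv (by ring)

lemma hasDerivAt_waveIntegral (h : IsLinearWave a b ν s u₁ u₂ p₁ p₂) {x : ℝ} (hx : x ∈ s) :
    HasDerivAt (fun y => waveIntegral a b ν (u₁ y) (u₂ y) (p₁ y) (p₂ y)) 0 x := by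
  obtain ⟨hu₁, hu₂, hp₁, hp₂⟩ := h x hx
  have hq₁ : HasDerivAt (fun y => a * u₁ y - ν * p₂ y) (a * p₁ x - ν * (b * u₂ x + ν * p₁ x)) x :=
    (hu₁.const_mul a).sub (hp₂.const_mul ν)
  have hq₂ : HasDerivAt (fun y => b * u₂ y + ν * p₁ y) (b * p₂ x + ν * (a * u₁ x - ν * p₂ x)) x :=
    (hu₂.const_mul b).add (hp₁.const_mul ν)
  exact ((((((hq₁.pow 2).add (hq₂.pow 2)).sub ((hp₁.pow 2).const_mul a)).sub
    ((hp₂.pow 2).const_mul b)).const_mul 2).sub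
    (((((hp₁.pow 2).add (hp₂.pow 2)).sub ((hu₁.pow 2).const_mul a)).sub
    ((hu₂.pow 2).const_mul b)).const_mul (ν ^ 2 - a - b))).congr_deriv (by ring)

lemma exists_sq_add_sq_eq {x₀ : ℝ} (h : IsLinearWave a b ν (Ioi x₀) u₁ u₂ p₁ p₂) :
    ∃ e, ∀ x ∈ Ioi x₀, p₁ x ^ 2 + p₂ x ^ 2 = e + a * u₁ x ^ 2 + b * u₂ x ^ 2 := by
  obtain ⟨e, hE⟩ := isOpen_Ioi.exists_is_const_of_hasDerivAt_zero isPreconnected_Ioi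
    fun x hx => h.hasDerivAt_waveEnergy hx
  refine ⟨e, fun x hx => ?_⟩
  rw [← hE x hx, waveEnergy]
  ring

lemma tendsto_velocity_nhds_zero {x₀ : ℝ} (h : IsLinearWave a b ν (Ioi x₀) u₁ u₂ p₁ p₂)
    (hu₁ : Tendsto u₁ atTop (𝓝 0)) (hu₂ : Tendsto u₂ atTop (𝓝 0)) :
    Tendsto p₁ atTop (𝓝 0) ∧ Tendsto p₂ atTop (𝓝 0) := by
  have hray : ∀ᶠ x in atTop, x ∈ Ioi x₀ := eventually_gt_atTop x₀
  obtain ⟨e, hE⟩ := h.exists_sq_add_sq_eq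
  have hp : Tendsto (fun x => p₁ x ^ 2 + p₂ x ^ 2) atTop (𝓝 e) := by
    have : Tendsto (fun x => e + a * u₁ x ^ 2 + b * u₂ x ^ 2) atTop (𝓝 e) := by
      simpa using ((hu₁.pow 2).const_mul a).const_add e |>.add ((hu₂.pow 2).const_mul b)
    exact this.congr' (hray.mono fun x hx => (hE x hx).symm)
  obtain ⟨hdot, hcross⟩ := tendsto_dot_and_cross_nhds_zero hu₁ hu₂ hp
  have hdot' : ∀ x ∈ Ioi x₀, HasDerivAt (fun x => u₁ x * p₁ x + u₂ x * p₂ x)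
      (e + 2 * a * u₁ x ^ 2 + 2 * b * u₂ x ^ 2 + ν * (u₂ x * p₁ x - u₁ x * p₂ x)) x := by
    intro x hx
    obtain ⟨hu₁, hu₂, hp₁, hp₂⟩ := h x hx
    exact ((hu₁.mul hp₁).add (hu₂.mul hp₂)).congr_deriv (by linear_combination hE x hx)
  have hdot'_lim : Tendsto (fun x => e + 2 * a * u₁ x ^ 2 + 2 * b * u₂ x ^ 2
      + ν * (u₂ x * p₁ x - u₁ x * p₂ x)) atTop (𝓝 e) := by
    simpa using ((((hu₁.pow 2).const_mul (2 * a)).const_add e).add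
      ((hu₂.pow 2).const_mul (2 * b))).add (hcross.const_mul ν)
  obtain rfl : e = 0 := eq_zero_of_tendsto_of_tendsto_deriv (hray.mono hdot') hdot hdot'_lim
  exact ⟨tendsto_zero_of_tendsto_sq <| squeeze_zero (fun _ => sq_nonneg _)
      (fun x => le_add_of_nonneg_right (sq_nonneg (p₂ x))) hp,
    tendsto_zero_of_tendsto_sq <| squeeze_zero (fun _ => sq_nonneg _)
      (fun x => le_add_of_nonneg_left (sq_nonneg (p₁ x))) hp⟩

lemma eq_zero_of_tendsto {l₁ l₂ : ℝ} (hl₁ : 0 < l₁) (hl₂ : 0 < l₂) (hν : 2 * (l₁ + l₂) ^ 2 < ν ^ 2)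
    {x₀ : ℝ} (h : IsLinearWave (2 * l₁ ^ 2) (2 * l₂ ^ 2) ν (Ioi x₀) u₁ u₂ p₁ p₂)
    (hu₁ : Tendsto u₁ atTop (𝓝 0)) (hu₂ : Tendsto u₂ atTop (𝓝 0)) {x : ℝ} (hx : x ∈ Ioi x₀) :
    u₁ x = 0 ∧ u₂ x = 0 ∧ p₁ x = 0 ∧ p₂ x = 0 := by
  obtain ⟨hp₁, hp₂⟩ := h.tendsto_velocity_nhds_zero hu₁ hu₂
  obtain ⟨c, hc⟩ := isOpen_Ioi.exists_is_const_of_hasDerivAt_zero isPreconnected_Ioi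
    fun x hx => h.hasDerivAt_waveIntegral hx
  have hcont : Continuous fun v : ℝ × ℝ × ℝ × ℝ =>
      waveIntegral (2 * l₁ ^ 2) (2 * l₂ ^ 2) ν v.1 v.2.1 v.2.2.1 v.2.2.2 := by
    unfold waveIntegral waveEnergy; fun_prop
  have hlim : Tendsto (fun x => waveIntegral (2 * l₁ ^ 2) (2 * l₂ ^ 2) ν
      (u₁ x) (u₂ x) (p₁ x) (p₂ x)) atTop (𝓝 0) := by
    have h0 : waveIntegral (2 * l₁ ^ 2) (2 * l₂ ^ 2) ν 0 0 0 0 = 0 := by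
      simp [waveIntegral, waveEnergy]
    simpa only [Function.comp_def, Prod.fst_zero, Prod.snd_zero, h0] using
      (hcont.tendsto 0).comp (hu₁.prodMk_nhds (hu₂.prodMk_nhds (hp₁.prodMk_nhds hp₂)))
  have hc0 : c = 0 :=
    tendsto_nhds_unique (tendsto_const_nhds.congr' ((eventually_gt_atTop x₀).mono
      fun y hy => (hc y hy).symm)) hlim
  exact eq_zero_of_waveIntegral_eq_zero hl₁ hl₂ hν (hc0 ▸ hc x hx)

end IsLinearWave

lemma isLinearWave_of_hasDerivAt {W : ℝ × ℝ → ℝ} {c : ℝ × ℝ} {a b ν : ℝ} {s : Set ℝ}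
    {U U' : ℝ → ℝ × ℝ} (hU : ∀ x, HasDerivAt U (U' x) x)
    (hU' : ∀ x, HasDerivAt U' (gradW W (U x) - ν • Jmat (U' x)) x)
    (hgrad : ∀ x ∈ s, gradW W (U x) = (a * ((U x).1 - c.1), b * ((U x).2 - c.2))) :
    IsLinearWave a b ν s (fun x => (U x).1 - c.1) (fun x => (U x).2 - c.2) (fun x => (U' x).1)
      (fun x => (U' x).2) := by
  intro x hx
  have hfst := fun {F : ℝ → ℝ × ℝ} {F'} (h : HasDerivAt F F' x) =>
    hasFDerivAt_fst.comp_hasDerivAt x h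
  have hsnd := fun {F : ℝ → ℝ × ℝ} {F'} (h : HasDerivAt F F' x) =>
    hasFDerivAt_snd.comp_hasDerivAt x h
  refine ⟨(hfst (hU x)).sub_const c.1, (hsnd (hU x)).sub_const c.2, ?_, ?_⟩
  · simpa [hgrad x hx, Jmat, Function.comp_def] using hfst (hU' x)
  · simpa [hgrad x hx, Jmat, Function.comp_def] using hsnd (hU' x)

def waveField (W : ℝ × ℝ → ℝ) (ν : ℝ) (X : (ℝ × ℝ) × (ℝ × ℝ)) : (ℝ × ℝ) × (ℝ × ℝ) :=
  (X.2, gradW W X.1 - ν • Jmat X.2)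

lemma contDiffAt_waveField {W : ℝ × ℝ → ℝ} {ν : ℝ} {c : ℝ × ℝ}
    (hW : ContDiffAt ℝ 1 (gradW W) c) : ContDiffAt ℝ 1 (waveField W ν) (c, 0) := by
  have hJ : ContDiff ℝ 1 Jmat := by unfold Jmat; fun_prop
  have hW' : ContDiffAt ℝ 1 (fun X : (ℝ × ℝ) × (ℝ × ℝ) => gradW W X.1) (c, 0) :=
    hW.comp (c, 0) contDiffAt_fst
  unfold waveField
  fun_prop

/-- Speed limit at an exactly quadratic well: if
`W(p) = λ₁²(p₁−p₊⁽¹⁾)² + λ₂²(p₂−p₊⁽²⁾)²` for `|p − p₊| < r` and `U` is a heteroclinic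
traveling wave, i.e. a solution of `-ν J U' = U'' − ∇W(U)` with `U(+∞) = p₊` and
`U(−∞) = p₋ ≠ p₊`, then `ν² ≤ 2(λ₁ + λ₂)²`. -/
theorem quadratic_well_speed_limit (W : ℝ × ℝ → ℝ) (pp pm : ℝ × ℝ) (hne : pm ≠ pp)
    (l1 l2 r : ℝ) (hl1 : 0 < l1) (hl2 : 0 < l2) (hr : 0 < r)
    (hWq : ∀ p : ℝ × ℝ, enorm2 (p - pp) < r →
      W p = l1 ^ 2 * (p.1 - pp.1) ^ 2 + l2 ^ 2 * (p.2 - pp.2) ^ 2)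
    (ν : ℝ) (U U' : ℝ → ℝ × ℝ)
    (hU : ∀ x, HasDerivAt U (U' x) x)
    (hU' : ∀ x, HasDerivAt U' (gradW W (U x) - ν • Jmat (U' x)) x)
    (htop : Tendsto U atTop (𝓝 pp)) (hbot : Tendsto U atBot (𝓝 pm)) :
    ν ^ 2 ≤ 2 * (l1 + l2) ^ 2 := by
  by_contra! hν
  set B := {p : ℝ × ℝ | enorm2 (p - pp) < r}
  have hB : IsOpen B := isOpen_lt (by unfold enorm2; fun_prop) continuous_const
  have hppB : pp ∈ B := by simpa [B, enorm2] using hr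
  have hgrad : ∀ p ∈ B, gradW W p = (2 * l1 ^ 2 * (p.1 - pp.1), 2 * l2 ^ 2 * (p.2 - pp.2)) :=
    fun p hp => (gradW_congr (eventually_of_mem (hB.mem_nhds hp) hWq)).trans
      (gradW_quadratic l1 l2 pp p)
  obtain ⟨x₀, hx₀⟩ := eventually_atTop.1 (htop.eventually (hB.mem_nhds hppB))
  have hwave := isLinearWave_of_hasDerivAt (s := Ioi x₀) hU hU' fun x hx => hgrad _ (hx₀ x hx.le)
  have hu₁ : Tendsto (fun x => (U x).1 - pp.1) atTop (𝓝 0) := by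
    simpa using ((continuous_fst.tendsto pp).comp htop).sub_const pp.1
  have hu₂ : Tendsto (fun x => (U x).2 - pp.2) atTop (𝓝 0) := by
    simpa using ((continuous_snd.tendsto pp).comp htop).sub_const pp.2
  obtain ⟨h₁, h₂, h₃, h₄⟩ := hwave.eq_zero_of_tendsto hl1 hl2 hν hu₁ hu₂ (lt_add_one x₀)
  have hrest : (U (x₀ + 1), U' (x₀ + 1)) = (pp, 0) := by
    simp only [sub_eq_zero] at h₁ h₂
    ext <;> assumption
  have hv : ContDiffAt ℝ 1 (waveField W ν) (pp, 0) := contDiffAt_waveField <|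
    ContDiffAt.congr_of_eventuallyEq (by fun_prop) (eventually_of_mem (hB.mem_nhds hppB) hgrad)
  have hconst := ODE_solution_eq_equilibrium hv (by simp [waveField, hgrad pp hppB, Jmat])
    (fun t => (hU t).prodMk (hU' t)) hrest
  exact hne <| tendsto_nhds_unique hbot <|
    tendsto_const_nhds.congr fun t => (congrArg Prod.fst (hconst t)).symm
end
end

section
/- Suppose λ > 0 and that W(p) = λ|p − p₊|² + G(|p − p₊|²) for all |p − p₊| < r, where G : ℝ → ℝ is differentiable with G(t) = o(t) and G'(t) = o(1) as t → 0⁺. If U : ℝ → ℝ² solves the traveling wave equation −ν J U' = U'' − ∇W(U) on an interval [x₀, ∞), stays in the ball B_r(p₊) there, and satisfies U(x) → p₊ and U'(x) → 0 as x → +∞, then ν² ≤ 8λ; i.e., no heteroclinic traveling wave approaching such a Schrödinger-type well exists with ν² > 8λ. -/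
/-!
Along the wave, with `V = U - p₊` and `η = |V|²`, the energy `½|U'|² - λη - G(η)` and the
angular momentum `V × U' - (ν/2)η` are conserved (the force `∇W` is radial and `J` only rotates
`U'`), so both vanish identically because they vanish at `+∞`. Lagrange's identity
`(V·U')² + (V × U')² = |V|²|U'|²` then gives `(ν²/4)η ≤ |U'|² = 2λη + 2G(η)`, i.e.
`(ν²/8 - λ)η ≤ G(η)`, which is incompatible with `G(η) = o(η)` as `η → 0⁺` unless
`ν² ≤ 8λ`.
-/

open Set Filter MeasureTheory Asymptotics
open scoped Topology

noncomputable section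

def sqNorm2 (v : ℝ × ℝ) : ℝ := v.1 ^ 2 + v.2 ^ 2

def cross2 (v w : ℝ × ℝ) : ℝ := v.1 * w.2 - v.2 * w.1

theorem enorm2_sq (v : ℝ × ℝ) : enorm2 v ^ 2 = sqNorm2 v :=
  Real.sq_sqrt (by positivity)

@[fun_prop]
theorem continuous_sqNorm2 : Continuous sqNorm2 := by
  unfold sqNorm2; fun_prop

theorem sqNorm2_pos {v : ℝ × ℝ} : 0 < sqNorm2 v ↔ v ≠ 0 := by
  have h1 := sq_nonneg v.1
  have h2 := sq_nonneg v.2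
  rw [lt_iff_le_and_ne, ne_comm, Ne, sqNorm2, add_eq_zero_iff_of_nonneg h1 h2,
    pow_eq_zero_iff two_ne_zero, pow_eq_zero_iff two_ne_zero, ← Prod.mk_eq_zero]
  exact and_iff_right (add_nonneg h1 h2)

theorem add_sq_add_cross2_sq (v w : ℝ × ℝ) :
    (v.1 * w.1 + v.2 * w.2) ^ 2 + cross2 v w ^ 2 = sqNorm2 v * sqNorm2 w := by
  unfold cross2 sqNorm2; ring

section Derivatives

variable {f g : ℝ → ℝ × ℝ} {f' g' : ℝ × ℝ} {x : ℝ}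

theorem HasDerivAt.sqNorm2 (hf : HasDerivAt f f' x) :
    HasDerivAt (fun y => sqNorm2 (f y)) (2 * ((f x).1 * f'.1 + (f x).2 * f'.2)) x := by
  have h1 := hasFDerivAt_fst.comp_hasDerivAt x hf
  have h2 := hasFDerivAt_snd.comp_hasDerivAt x hf
  exact ((h1.pow 2).add (h2.pow 2)).congr_deriv (by simp; ring)

theorem HasDerivAt.cross2 (hf : HasDerivAt f f' x) (hg : HasDerivAt g g' x) :
    HasDerivAt (fun y => cross2 (f y) (g y)) (cross2 f' (g x) + cross2 (f x) g') x := by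
  have hf1 := hasFDerivAt_fst.comp_hasDerivAt x hf
  have hf2 := hasFDerivAt_snd.comp_hasDerivAt x hf
  have hg1 := hasFDerivAt_fst.comp_hasDerivAt x hg
  have hg2 := hasFDerivAt_snd.comp_hasDerivAt x hg
  exact ((hf1.mul hg2).sub (hf2.mul hg1)).congr_deriv (by simp [_root_.cross2]; ring)

end Derivatives

theorem eq_of_hasDerivAt_zero_of_tendsto {E : Type*} [NormedAddCommGroup E] [NormedSpace ℝ E]
    {f : ℝ → E} {x₀ : ℝ} {L : E} (hf : ∀ x, x₀ ≤ x → HasDerivAt f 0 x)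
    (hL : Tendsto f atTop (𝓝 L)) (x : ℝ) (hx : x₀ ≤ x) : f x = L := by
  have hconst : ∀ y, x₀ ≤ y → f y = f x₀ := fun y hy =>
    constant_of_has_deriv_right_zero (fun z hz => (hf z hz.1).continuousAt.continuousWithinAt)
      (fun z hz => (hf z hz.1).hasDerivWithinAt) y ⟨hy, le_rfl⟩
  have hL' : Tendsto f atTop (𝓝 (f x₀)) :=
    tendsto_const_nhds.congr' <| (eventually_ge_atTop x₀).mono fun y hy => (hconst y hy).symm
  rw [hconst x hx, tendsto_nhds_unique hL' hL]

def energy (lam : ℝ) (G : ℝ → ℝ) (v w : ℝ × ℝ) : ℝ :=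
  sqNorm2 w / 2 - lam * sqNorm2 v - G (sqNorm2 v)

def angularMomentum (ν : ℝ) (v w : ℝ × ℝ) : ℝ := cross2 v w - ν / 2 * sqNorm2 v

section Conservation

variable {V W : ℝ → ℝ × ℝ} {ν x : ℝ}

theorem hasDerivAt_angularMomentum {k : ℝ} (hV : HasDerivAt V (W x) x)
    (hW : HasDerivAt W (k • V x - ν • Jmat (W x)) x) :
    HasDerivAt (fun y => angularMomentum ν (V y) (W y)) 0 x :=
  ((hV.cross2 hW).sub (hV.sqNorm2.const_mul (ν / 2))).congr_deriv <| by
    simp [cross2, Jmat]; ring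

theorem hasDerivAt_energy {lam g : ℝ} {G : ℝ → ℝ} (hG : HasDerivAt G g (sqNorm2 (V x)))
    (hV : HasDerivAt V (W x) x)
    (hW : HasDerivAt W ((2 * lam + 2 * g) • V x - ν • Jmat (W x)) x) :
    HasDerivAt (fun y => energy lam G (V y) (W y)) 0 x :=
  (((hW.sqNorm2.div_const 2).sub (hV.sqNorm2.const_mul lam)).sub
    (hG.comp x hV.sqNorm2)).congr_deriv (by simp [Jmat]; ring)

end Conservation

section Limits

variable {α : Type*} {l : Filter α} {V W : α → ℝ × ℝ}

theorem tendsto_angularMomentum_zero (ν : ℝ) (hV : Tendsto V l (𝓝 0))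
    (hW : Tendsto W l (𝓝 0)) :
    Tendsto (fun x => angularMomentum ν (V x) (W x)) l (𝓝 0) := by
  have hcont : Continuous fun p : (ℝ × ℝ) × (ℝ × ℝ) => angularMomentum ν p.1 p.2 := by
    unfold angularMomentum cross2; fun_prop
  exact (hcont.tendsto' (0, 0) 0 (by simp [angularMomentum, cross2, sqNorm2])).comp
    (hV.prodMk_nhds hW)

theorem tendsto_energy_zero (lam : ℝ) {G : ℝ → ℝ} (hGo : G =o[𝓝[>] 0] fun t => t)
    (hV : Tendsto (fun x => sqNorm2 (V x)) l (𝓝[>] 0)) (hW : Tendsto W l (𝓝 0)) :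
    Tendsto (fun x => energy lam G (V x) (W x)) l (𝓝 0) := by
  have hV0 : Tendsto (fun x => sqNorm2 (V x)) l (𝓝 0) := tendsto_nhdsWithin_iff.mp hV |>.1
  have hW0 : Tendsto (fun x => sqNorm2 (W x)) l (𝓝 0) :=
    (continuous_sqNorm2.tendsto' 0 0 (by simp [sqNorm2])).comp hW
  have hG0 : Tendsto (fun x => G (sqNorm2 (V x))) l (𝓝 0) :=
    (hGo.comp_tendsto hV).trans_tendsto hV0
  simpa [energy] using ((hW0.div_const 2).sub (hV0.const_mul lam)).sub hG0

end Limits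

theorem sq_mul_sqNorm2_le_of_cross2_eq {v w : ℝ × ℝ} {c : ℝ} (hv : 0 < sqNorm2 v)
    (h : cross2 v w = c * sqNorm2 v) : c ^ 2 * sqNorm2 v ≤ sqNorm2 w := by
  refine le_of_mul_le_mul_left ?_ hv
  calc sqNorm2 v * (c ^ 2 * sqNorm2 v) = cross2 v w ^ 2 := by rw [h]; ring
    _ ≤ sqNorm2 v * sqNorm2 w := by
      rw [← add_sq_add_cross2_sq]; exact le_add_of_nonneg_left (sq_nonneg _)

theorem mul_sqNorm2_le_of_energy_eq_zero_of_angularMomentum_eq_zero {lam ν : ℝ} {G : ℝ → ℝ}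
    {v w : ℝ × ℝ} (hv : 0 < sqNorm2 v) (hE : energy lam G v w = 0)
    (hA : angularMomentum ν v w = 0) :
    (ν ^ 2 / 8 - lam) * sqNorm2 v ≤ G (sqNorm2 v) := by
  have hcross : cross2 v w = ν / 2 * sqNorm2 v := by
    unfold angularMomentum at hA; linarith
  have hw := sq_mul_sqNorm2_le_of_cross2_eq hv hcross
  unfold energy at hE
  linarith

theorem nonpos_of_mul_le_of_isLittleO {α : Type*} {l : Filter α} [l.NeBot] {G : ℝ → ℝ}
    {η : α → ℝ} {c : ℝ} (hGo : G =o[𝓝[>] 0] fun t => t) (hη : Tendsto η l (𝓝[>] 0))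
    (h : ∀ᶠ x in l, c * η x ≤ G (η x)) : c ≤ 0 := by
  by_contra! hc
  obtain ⟨x, hGx, hcx, hηx⟩ :=
    (((hGo.comp_tendsto hη).bound (half_pos hc)).and (h.and (hη self_mem_nhdsWithin))).exists
  simp only [Function.comp_apply, Real.norm_eq_abs, abs_of_pos (mem_Ioi.mp hηx)] at hGx
  nlinarith [le_abs_self (G (η x)), mem_Ioi.mp hηx]

theorem schrodinger_well_speed_limit_general (lam ν x0 : ℝ)
    (pp : ℝ × ℝ) (G G' : ℝ → ℝ)
    (hG : ∀ t : ℝ, HasDerivAt G (G' t) t)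
    (hGo : (fun t => G t) =o[nhdsWithin 0 (Set.Ioi 0)] fun t : ℝ => t)
    (U U' : ℝ → ℝ × ℝ)
    (hne : ∀ x : ℝ, x0 ≤ x → U x ≠ pp)
    (hU : ∀ x : ℝ, x0 ≤ x → HasDerivAt U (U' x) x)
    (hU' : ∀ x : ℝ, x0 ≤ x → HasDerivAt U'
        ((2 * lam + 2 * G' (enorm2 (U x - pp) ^ 2)) • (U x - pp) - ν • Jmat (U' x)) x)
    (htop : Tendsto U atTop (𝓝 pp))
    (hdtop : Tendsto U' atTop (𝓝 0)) :
    ν ^ 2 ≤ 8 * lam := by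
  simp only [enorm2_sq] at hU'
  have hV : ∀ x, x0 ≤ x → HasDerivAt (fun y => U y - pp) (U' x) x :=
    fun x hx => (hU x hx).sub_const pp
  have hVlim : Tendsto (fun x => U x - pp) atTop (𝓝 0) := tendsto_sub_nhds_zero_iff.mpr htop
  have hη : Tendsto (fun x => sqNorm2 (U x - pp)) atTop (𝓝[>] 0) := by
    refine tendsto_nhdsWithin_iff.mpr ⟨?_, ?_⟩
    · exact (continuous_sqNorm2.tendsto' 0 0 (by simp [sqNorm2])).comp hVlim
    · filter_upwards [eventually_ge_atTop x0] with x hx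
      exact sqNorm2_pos.mpr (sub_ne_zero.mpr (hne x hx))
  have hE := eq_of_hasDerivAt_zero_of_tendsto
    (fun x hx => hasDerivAt_energy (hG _) (hV x hx) (hU' x hx))
    (tendsto_energy_zero lam hGo hη hdtop)
  have hA := eq_of_hasDerivAt_zero_of_tendsto
    (fun x hx => hasDerivAt_angularMomentum (hV x hx) (hU' x hx))
    (tendsto_angularMomentum_zero ν hVlim hdtop)
  have hc := nonpos_of_mul_le_of_isLittleO hGo hη <| by
    filter_upwards [eventually_ge_atTop x0, hη self_mem_nhdsWithin] with x hx hηx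
    exact mul_sqNorm2_le_of_energy_eq_zero_of_angularMomentum_eq_zero hηx (hE x hx) (hA x hx)
  linarith

/-- Speed limit at a Schrödinger-type (radial) well: suppose
`W(p) = λ|p−p₊|² + G(|p−p₊|²)` for `|p−p₊| < r` with `G` differentiable, `G(t) = o(t)`
and `G'(t) = o(1)` as `t → 0⁺`. If `U` solves the traveling wave equation
`-ν J U' = U'' − ∇W(U)` on `[x₀,∞)` (where `∇W(p) = (2λ + 2G'(|p−p₊|²))(p−p₊)`),
stays in the ball `B_r(p₊)` there without touching `p₊`, and `U(x) → p₊`, `U'(x) → 0`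
as `x → +∞`, then `ν² ≤ 8λ`. -/
theorem schrodinger_well_speed_limit (lam r ν x0 : ℝ) (hlam : 0 < lam) (hr : 0 < r)
    (pp : ℝ × ℝ) (G G' : ℝ → ℝ)
    (hG : ∀ t : ℝ, HasDerivAt G (G' t) t)
    (hGo : (fun t => G t) =o[nhdsWithin 0 (Set.Ioi 0)] fun t : ℝ => t)
    (hG'o : (fun t => G' t) =o[nhdsWithin 0 (Set.Ioi 0)] fun _ : ℝ => (1:ℝ))
    (U U' : ℝ → ℝ × ℝ)
    (hball : ∀ x : ℝ, x0 ≤ x → enorm2 (U x - pp) < r)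
    (hne : ∀ x : ℝ, x0 ≤ x → U x ≠ pp)
    (hU : ∀ x : ℝ, x0 ≤ x → HasDerivAt U (U' x) x)
    (hU' : ∀ x : ℝ, x0 ≤ x → HasDerivAt U'
        ((2 * lam + 2 * G' (enorm2 (U x - pp) ^ 2)) • (U x - pp) - ν • Jmat (U' x)) x)
    (htop : Tendsto U atTop (𝓝 pp))
    (hdtop : Tendsto U' atTop (𝓝 0)) :
    ν ^ 2 ≤ 8 * lam :=
  schrodinger_well_speed_limit_general lam ν x0 pp G G' hG hGo U U' hne hU hU' htop hdtop
end
end
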